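/- Let N ≥ 2, 1* := N/(N-1), 0 < a < 1*, b > 1, and g(t) := ((1+t)^{1/b} - 1)(1+t)^{1*/a - 1/b} / t^{1*/a} for t > 0. Then g(t) → ∞ as t → 0⁺ and g(t) → 1 as t → ∞; moreover there is a unique t₁ > 0 such that g is strictly decreasing on (0,t₁) and strictly increasing on (t₁,∞), so inf_{t>0} g(t) = g(t₁) ∈ (0,1) is attained. -/

import Mathlib

/-!
Put `c = 1*/a > 1` and `p = 1/b ∈ (0, 1)`. Then
`g'(t) = g̃(t) (1 + t)^(c - p - 1) / t^(c + 1)` with `g̃(t) = p t + c (1 - (1 + t)^p)`,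
so `g'` has the sign of `g̃`. Since `g̃(0) = 0` and `g̃` decreases up to
`t₀ = c^(1/(1-p)) - 1` and then increases to `∞` (as `p < 1`), `g̃` has a unique zero
`t₁ > 0`, negative before it and positive after it: `t₁` is the minimum of `g`.
Near `0`, `g(t) ≈ p t^(1 - c) → ∞`; at `∞`, `g → 1`, and `g(t₁) < 1` because `g`
increases strictly on `[t₁, ∞)`.
-/

open Real Filter Topology Set

/-- The function `g` of the critical case `q = 1*`. -/
noncomputable def gFun (os a b t : ℝ) : ℝ :=
  ((1+t) ^ (1/b) - 1) * (1+t) ^ (os/a - 1/b) / t ^ (os/a)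

section Monotonicity

variable {f f' : ℝ → ℝ} {D : Set ℝ}

lemma strictMonoOn_of_hasDerivAt_pos (hD : Convex ℝ D) (hf : ∀ x ∈ D, HasDerivAt f (f' x) x)
    (hf' : ∀ x ∈ interior D, 0 < f' x) : StrictMonoOn f D :=
  strictMonoOn_of_hasDerivWithinAt_pos hD (fun x hx ↦ (hf x hx).continuousAt.continuousWithinAt)
    (fun x hx ↦ (hf x (interior_subset hx)).hasDerivWithinAt) hf'

lemma strictAntiOn_of_hasDerivAt_neg (hD : Convex ℝ D) (hf : ∀ x ∈ D, HasDerivAt f (f' x) x)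
    (hf' : ∀ x ∈ interior D, f' x < 0) : StrictAntiOn f D :=
  strictAntiOn_of_hasDerivWithinAt_neg hD (fun x hx ↦ (hf x hx).continuousAt.continuousWithinAt)
    (fun x hx ↦ (hf x (interior_subset hx)).hasDerivWithinAt) hf'

end Monotonicity

section Valley

variable {f : ℝ → ℝ} {a s t : ℝ}

lemma exists_sign_change_of_strictAntiOn_of_strictMonoOn (hat : a < t) (hfa : f a = 0)
    (hanti : StrictAntiOn f (Icc a t)) (hmono : StrictMonoOn f (Ici t))
    (hcont : ContinuousOn f (Ici t)) (htop : Tendsto f atTop atTop) :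
    ∃ s, a < s ∧ (∀ x ∈ Ioo a s, f x < 0) ∧ ∀ x ∈ Ioi s, 0 < f x := by
  have hft : f t < 0 := hfa ▸ hanti (left_mem_Icc.2 hat.le) (right_mem_Icc.2 hat.le) hat
  obtain ⟨T, hfT, htT⟩ := ((htop.eventually_gt_atTop 0).and (eventually_ge_atTop t)).exists
  obtain ⟨s, ⟨hts, -⟩, hfs⟩ :=
    intermediate_value_Ioo htT (hcont.mono Icc_subset_Ici_self) ⟨hft, hfT⟩
  refine ⟨s, hat.trans hts, fun x ⟨hax, hxs⟩ ↦ ?_, fun x hsx ↦ ?_⟩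
  · rcases le_or_gt x t with hxt | htx
    · exact hfa ▸ hanti (left_mem_Icc.2 hat.le) ⟨hax.le, hxt⟩ hax
    · exact hfs ▸ hmono htx.le hts.le hxs
  · exact hfs ▸ hmono hts.le (hts.le.trans (le_of_lt hsx)) hsx

lemma le_of_strictAntiOn_of_strictMonoOn (has : a < s)
    (hanti : StrictAntiOn f (Ioc a t)) (hmono : StrictMonoOn f (Ici s)) : t ≤ s :=
  not_lt.1 fun hst ↦
    (hanti ⟨has, hst.le⟩ ⟨has.trans hst, le_rfl⟩ hst).not_gt (hmono self_mem_Ici hst.le hst)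

lemma isLeast_image_Ioi_of_antitoneOn_of_monotoneOn (has : a < s)
    (hanti : AntitoneOn f (Ioc a s)) (hmono : MonotoneOn f (Ici s)) :
    IsLeast (f '' Ioi a) (f s) := by
  refine ⟨mem_image_of_mem f has, ?_⟩
  rintro _ ⟨x, hax, rfl⟩
  rcases le_total x s with hxs | hsx
  · exact hanti ⟨hax, hxs⟩ ⟨has, le_rfl⟩ hxs
  · exact hmono self_mem_Ici hsx hsx

lemma StrictMonoOn.lt_of_tendsto_atTop {l : ℝ} (hmono : StrictMonoOn f (Ici s))
    (hl : Tendsto f atTop (𝓝 l)) : f s < l := by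
  have hs : s < s + 1 := lt_add_one s
  exact (hmono self_mem_Ici hs.le hs).trans_le <| ge_of_tendsto hl <|
    (eventually_ge_atTop (s + 1)).mono fun x hx ↦ hmono.monotoneOn hs.le (hs.le.trans hx) hx

end Valley

noncomputable def gPow (c p t : ℝ) : ℝ := ((1 + t) ^ p - 1) * (1 + t) ^ (c - p) / t ^ c

noncomputable def gTilde (c p t : ℝ) : ℝ := p * t + c * (1 - (1 + t) ^ p)

lemma gFun_eq_gPow (os a b : ℝ) : gFun os a b = gPow (os / a) (1 / b) := rfl

section GPow

variable {c p : ℝ}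

lemma hasDerivAt_one_add_rpow (q : ℝ) {t : ℝ} (ht : -1 < t) :
    HasDerivAt (fun t : ℝ ↦ (1 + t) ^ q) (q * (1 + t) ^ (q - 1)) t := by
  simpa using ((hasDerivAt_id t).const_add 1).rpow_const (p := q)
    (Or.inl (by simp only [id]; linarith))

lemma hasDerivAt_gTilde {t : ℝ} (ht : -1 < t) :
    HasDerivAt (gTilde c p) (p * (1 - c * (1 + t) ^ (p - 1))) t := by
  have := ((hasDerivAt_id t).const_mul p).add
    (((hasDerivAt_one_add_rpow p ht).const_sub 1).const_mul c)
  exact this.congr_deriv (by ring_nf)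

lemma hasDerivAt_gPow {t : ℝ} (ht : 0 < t) :
    HasDerivAt (gPow c p) (gTilde c p t * (1 + t) ^ (c - p - 1) / t ^ (c + 1)) t := by
  have h1t : (0 : ℝ) < 1 + t := by linarith
  have h := (((hasDerivAt_one_add_rpow p (by linarith)).sub_const 1).mul
    (hasDerivAt_one_add_rpow (c - p) (by linarith))).div
    ((hasDerivAt_id t).rpow_const (p := c) (Or.inl ht.ne')) (rpow_pos_of_pos ht c).ne'
  refine h.congr_deriv ?_
  have e1 : (1 + t) ^ (p - 1) = (1 + t) ^ p / (1 + t) := rpow_sub_one h1t.ne' p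
  have e2 : (1 + t) ^ (c - p) = (1 + t) ^ c / (1 + t) ^ p := rpow_sub h1t c p
  have e3 : (1 + t) ^ (c - p - 1) = (1 + t) ^ c / (1 + t) ^ p / (1 + t) := by
    rw [rpow_sub_one h1t.ne', e2]
  have e4 : t ^ (c - 1) = t ^ c / t := rpow_sub_one ht.ne' c
  have e5 : t ^ (c + 1) = t ^ c * t := rpow_add_one ht.ne' c
  have hup : 0 < (1 + t) ^ p := rpow_pos_of_pos h1t p
  have huc : 0 < (1 + t) ^ c := rpow_pos_of_pos h1t c
  have htc : 0 < t ^ c := rpow_pos_of_pos ht c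
  simp only [id, Pi.mul_apply, gTilde, e1, e2, e3, e4, e5]
  field_simp
  ring

lemma gTilde_zero : gTilde c p 0 = 0 := by simp [gTilde]

lemma tendsto_gTilde_atTop (hp0 : 0 < p) (hp1 : p < 1) : Tendsto (gTilde c p) atTop atTop := by
  have h1 : Tendsto (fun t : ℝ ↦ 1 + t) atTop atTop :=
    tendsto_atTop_add_const_left _ 1 tendsto_id
  have hlin : Tendsto (fun t : ℝ ↦ p * (1 + t) ^ (1 - p) - c) atTop atTop :=
    tendsto_atTop_add_const_right _ (-c)
      (((tendsto_rpow_atTop (by linarith)).comp h1).const_mul_atTop hp0)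
  refine tendsto_atTop_add_const_right _ (c - p)
    (((tendsto_rpow_atTop hp0).comp h1).atTop_mul_atTop₀ hlin) |>.congr' ?_
  filter_upwards [eventually_gt_atTop 0] with t ht
  have : (1 + t) ^ p * (1 + t) ^ (1 - p) = 1 + t := by
    rw [← rpow_add (by linarith)]; norm_num
  simp only [Function.comp, gTilde]
  linear_combination p * this

-- `c⁻¹ ^ (p - 1)⁻¹ - 1` is the zero of the derivative `p (1 - c (1 + t) ^ (p - 1))`.
lemma strictAntiOn_gTilde (hc : 0 < c) (hp0 : 0 < p) (hp1 : p < 1) :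
    StrictAntiOn (gTilde c p) (Ioc (-1) (c⁻¹ ^ (p - 1)⁻¹ - 1)) := by
  refine strictAntiOn_of_hasDerivAt_neg (convex_Ioc _ _) (fun t ht ↦ hasDerivAt_gTilde ht.1) ?_
  rintro t ht
  rw [interior_Ioc] at ht
  have : c⁻¹ < (1 + t) ^ (p - 1) :=
    (lt_rpow_inv_iff_of_neg (by linarith [ht.1]) (inv_pos.2 hc) (by linarith)).1
      (by linarith [ht.2])
  have : 1 < c * (1 + t) ^ (p - 1) := (inv_lt_iff_one_lt_mul₀' hc).1 this
  nlinarith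

lemma strictMonoOn_gTilde (hc : 0 < c) (hp0 : 0 < p) (hp1 : p < 1) :
    StrictMonoOn (gTilde c p) (Ici (c⁻¹ ^ (p - 1)⁻¹ - 1)) := by
  have h₀ : 0 < c⁻¹ ^ (p - 1)⁻¹ := rpow_pos_of_pos (inv_pos.2 hc) _
  refine strictMonoOn_of_hasDerivAt_pos (convex_Ici _)
    (fun t ht ↦ hasDerivAt_gTilde (by simp only [mem_Ici] at ht; linarith)) ?_
  rintro t ht
  rw [interior_Ici, mem_Ioi] at ht
  have : (1 + t) ^ (p - 1) < c⁻¹ :=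
    (rpow_inv_lt_iff_of_neg (inv_pos.2 hc) (by linarith) (by linarith)).1 (by linarith)
  have : c * (1 + t) ^ (p - 1) < 1 := by
    simpa [mul_inv_cancel₀ hc.ne'] using mul_lt_mul_of_pos_left this hc
  nlinarith

lemma exists_gTilde_sign_change (hc : 1 < c) (hp0 : 0 < p) (hp1 : p < 1) :
    ∃ s, 0 < s ∧ (∀ t ∈ Ioo 0 s, gTilde c p t < 0) ∧
      ∀ t ∈ Ioi s, 0 < gTilde c p t := by
  have ht₀ : 0 < c⁻¹ ^ (p - 1)⁻¹ - 1 := sub_pos.2 <|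
    one_lt_rpow_of_pos_of_lt_one_of_neg (by positivity) (inv_lt_one_of_one_lt₀ hc)
      (inv_lt_zero.2 (by linarith))
  refine exists_sign_change_of_strictAntiOn_of_strictMonoOn ht₀ gTilde_zero
    ((strictAntiOn_gTilde (by linarith) hp0 hp1).mono
      ((Icc_subset_Ioc_iff ht₀.le).2 ⟨by norm_num, le_rfl⟩))
    (strictMonoOn_gTilde (by linarith) hp0 hp1)
    (fun t ht ↦ (hasDerivAt_gTilde (by simp only [mem_Ici] at ht; linarith)).continuousAt
      |>.continuousWithinAt)
    (tendsto_gTilde_atTop hp0 hp1)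

lemma gPow_pos (hp0 : 0 < p) {t : ℝ} (ht : 0 < t) : 0 < gPow c p t := by
  have hbase : 1 < 1 + t := by linarith
  exact div_pos (mul_pos (sub_pos.2 (one_lt_rpow hbase hp0)) (rpow_pos_of_pos (by linarith) _))
    (rpow_pos_of_pos ht c)

lemma tendsto_gPow_nhdsGT_zero (hc : 1 < c) (hp0 : 0 < p) :
    Tendsto (gPow c p) (𝓝[>] 0) atTop := by
  have hslope : Tendsto (fun t : ℝ ↦ ((1 + t) ^ p - 1) / t) (𝓝[>] 0) (𝓝 p) := by
    simpa [div_eq_inv_mul] using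
      (hasDerivAt_one_add_rpow p (by norm_num : (-1 : ℝ) < 0)).tendsto_slope_zero_right
  have hpow : Tendsto (fun t : ℝ ↦ (1 + t) ^ (c - p)) (𝓝[>] 0) (𝓝 1) := by
    have : ContinuousAt (fun t : ℝ ↦ (1 + t) ^ (c - p)) 0 :=
      (hasDerivAt_one_add_rpow (c - p) (by norm_num : (-1 : ℝ) < 0)).continuousAt
    simpa using this.tendsto.mono_left nhdsWithin_le_nhds
  refine (Tendsto.pos_mul_atTop hp0 (by simpa using hslope.mul hpow)
    (tendsto_rpow_neg_nhdsGT_zero (by linarith : 1 - c < 0))).congr' ?_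
  filter_upwards [self_mem_nhdsWithin] with t (ht : 0 < t)
  have htc := rpow_pos_of_pos ht c
  rw [gPow, rpow_sub ht, rpow_one]
  field_simp

lemma tendsto_gPow_atTop (hp0 : 0 < p) : Tendsto (gPow c p) atTop (𝓝 1) := by
  have hratio : Tendsto (fun t : ℝ ↦ (1 + t) / t) atTop (𝓝 1) := by
    simpa using (tendsto_const_nhds (x := (1 : ℝ))).add tendsto_inv_atTop_zero |>.congr' <|
      (eventually_gt_atTop 0).mono fun t ht ↦ by field_simp; ring
  have hratio_rpow (q : ℝ) : Tendsto (fun t : ℝ ↦ ((1 + t) / t) ^ q) atTop (𝓝 1) := by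
    simpa [Function.comp_def] using
      (continuousAt_id.rpow_const (Or.inl one_ne_zero)).tendsto.comp hratio
  have key : Tendsto (fun t : ℝ ↦ ((1 + t) / t) ^ c - ((1 + t) / t) ^ (c - p) * t ^ (-p))
      atTop (𝓝 1) := by
    simpa using (hratio_rpow c).sub ((hratio_rpow (c - p)).mul (tendsto_rpow_neg_atTop hp0))
  refine key.congr' ?_
  filter_upwards [eventually_gt_atTop 0] with t ht
  have h1t : 0 < 1 + t := by linarith
  have htp := rpow_pos_of_pos ht p
  have htc := rpow_pos_of_pos ht c
  rw [gPow, div_rpow h1t.le ht.le, div_rpow h1t.le ht.le, rpow_sub ht, rpow_neg ht.le,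
    rpow_sub h1t]
  field_simp

lemma exists_gPow_valley (hc : 1 < c) (hp0 : 0 < p) (hp1 : p < 1) :
    ∃ s, 0 < s ∧ StrictAntiOn (gPow c p) (Ioc 0 s) ∧ StrictMonoOn (gPow c p) (Ici s) := by
  obtain ⟨s, hs, hneg, hpos⟩ := exists_gTilde_sign_change hc hp0 hp1
  have hfactor {t : ℝ} (ht : 0 < t) : 0 < (1 + t) ^ (c - p - 1) / t ^ (c + 1) :=
    div_pos (rpow_pos_of_pos (by linarith) _) (rpow_pos_of_pos ht _)
  refine ⟨s, hs, ?_, ?_⟩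
  · refine strictAntiOn_of_hasDerivAt_neg (convex_Ioc 0 s) (fun t ht ↦ hasDerivAt_gPow ht.1) ?_
    rintro t ht
    rw [interior_Ioc] at ht
    rw [mul_div_assoc]
    exact mul_neg_of_neg_of_pos (hneg t ht) (hfactor ht.1)
  · refine strictMonoOn_of_hasDerivAt_pos (convex_Ici s)
      (fun t ht ↦ hasDerivAt_gPow (hs.trans_le ht)) ?_
    rintro t ht
    rw [interior_Ici] at ht
    rw [mul_div_assoc]
    exact mul_pos (hpos t ht) (hfactor (hs.trans ht))

end GPow

theorem g_min_interior_general (N : ℕ) (a b : ℝ) (ha0 : 0 < a)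
    (ha : a < (N : ℝ) / ((N : ℝ) - 1)) (hb : 1 < b) :
    Tendsto (gFun ((N:ℝ)/((N:ℝ)-1)) a b) (nhdsWithin 0 (Set.Ioi 0)) atTop ∧
    Tendsto (gFun ((N:ℝ)/((N:ℝ)-1)) a b) atTop (nhds 1) ∧
    ∃! t₁ : ℝ, 0 < t₁ ∧
      StrictAntiOn (gFun ((N:ℝ)/((N:ℝ)-1)) a b) (Set.Ioc 0 t₁) ∧
      StrictMonoOn (gFun ((N:ℝ)/((N:ℝ)-1)) a b) (Set.Ici t₁) ∧
      sInf { r | ∃ t : ℝ, 0 < t ∧ r = gFun ((N:ℝ)/((N:ℝ)-1)) a b t } =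
        gFun ((N:ℝ)/((N:ℝ)-1)) a b t₁ ∧
      0 < gFun ((N:ℝ)/((N:ℝ)-1)) a b t₁ ∧ gFun ((N:ℝ)/((N:ℝ)-1)) a b t₁ < 1 := by
  have hc : 1 < (N : ℝ) / ((N : ℝ) - 1) / a := (one_lt_div ha0).2 ha
  have hp0 : 0 < 1 / b := by positivity
  have hp1 : 1 / b < 1 := (div_lt_one (by linarith)).2 hb
  have hset : {r | ∃ t : ℝ, 0 < t ∧ r = gFun ((N:ℝ)/((N:ℝ)-1)) a b t} =
      gFun ((N:ℝ)/((N:ℝ)-1)) a b '' Ioi 0 := by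
    ext r; simp [eq_comm]
  rw [hset, gFun_eq_gPow]
  obtain ⟨t₁, ht₁, hanti, hmono⟩ := exists_gPow_valley hc hp0 hp1
  have hlim := tendsto_gPow_atTop (c := (N : ℝ) / ((N : ℝ) - 1) / a) hp0
  refine ⟨tendsto_gPow_nhdsGT_zero hc hp0, hlim, t₁,
    ⟨ht₁, hanti, hmono, ?_, gPow_pos hp0 ht₁, hmono.lt_of_tendsto_atTop hlim⟩,
    fun t₂ ⟨ht₂, hanti₂, hmono₂, _⟩ ↦ ?_⟩
  · exact (isLeast_image_Ioi_of_antitoneOn_of_monotoneOn ht₁ hanti.antitoneOn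
      hmono.monotoneOn).csInf_eq
  · exact le_antisymm (le_of_strictAntiOn_of_strictMonoOn ht₁ hanti₂ hmono)
      (le_of_strictAntiOn_of_strictMonoOn ht₂ hanti hmono₂)

/-- for `0 < a < 1*` and `b > 1`, `g → ∞` at `0⁺`, `g → 1` at
`∞`, and there is a unique `t₁ > 0` such that `g` is strictly decreasing on
`(0,t₁]` and strictly increasing on `[t₁,∞)`; the infimum `g(t₁) ∈ (0,1)` is
attained. -/
theorem g_min_interior (N : ℕ) (hN : 2 ≤ N) (a b : ℝ) (ha0 : 0 < a)
    (ha : a < (N : ℝ) / ((N : ℝ) - 1)) (hb : 1 < b) :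
    Tendsto (gFun ((N:ℝ)/((N:ℝ)-1)) a b) (nhdsWithin 0 (Set.Ioi 0)) atTop ∧
    Tendsto (gFun ((N:ℝ)/((N:ℝ)-1)) a b) atTop (nhds 1) ∧
    ∃! t₁ : ℝ, 0 < t₁ ∧
      StrictAntiOn (gFun ((N:ℝ)/((N:ℝ)-1)) a b) (Set.Ioc 0 t₁) ∧
      StrictMonoOn (gFun ((N:ℝ)/((N:ℝ)-1)) a b) (Set.Ici t₁) ∧
      sInf { r | ∃ t : ℝ, 0 < t ∧ r = gFun ((N:ℝ)/((N:ℝ)-1)) a b t } =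
        gFun ((N:ℝ)/((N:ℝ)-1)) a b t₁ ∧
      0 < gFun ((N:ℝ)/((N:ℝ)-1)) a b t₁ ∧ gFun ((N:ℝ)/((N:ℝ)-1)) a b t₁ < 1 :=
  g_min_interior_general N a b ha0 ha hb
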